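/- arXiv:1306.1692 — 5 statements merged into one kernel-verified Lean document; each statement's English description precedes it below -/
import Mathlib

section
/- If p : V \ {m} → V is injective and satisfies p(v) > v for every v ∈ V \ {m}, then p(v) = min{w ∈ V : w > v} for every v ∈ V \ {m}; in particular there is exactly one such map p, namely the one linking each node to the next-larger node. (This shows that the sorted-list structure of the legal state, in which every node other than the maximum has exactly one predecessor larger than itself and is the unique successor of its predecessor, is uniquely determined by the node set.) -/
/-! If some `w ∈ V` lay strictly between `v` and `p v`, then `p` would map the nodes `≥ w` other
than `m` injectively into the nodes `> w`, which are no more numerous; so `p` would hit `p v`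
there, against injectivity, as `v < w`. -/

open Finset

namespace Finset

variable {α : Type*} [LinearOrder α] {V : Finset α} {m w : α} {p : α → α}

lemma card_filter_lt_le_card_filter_le_erase (hw : w ∈ V) (m : α) :
    #(V.filter (w < ·)) ≤ #((V.filter (w ≤ ·)).erase m) := by
  have hle : V.filter (w ≤ ·) = insert w (V.filter (w < ·)) := by
    ext u
    simp only [mem_filter, mem_insert, le_iff_eq_or_lt]
    grind
  calc #(V.filter (w < ·)) = #(V.filter (w ≤ ·)) - 1 := by
        rw [hle, card_insert_of_notMem (by simp)]; rfl
    _ ≤ _ := pred_card_le_card_erase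

lemma surjOn_filter_le_erase_filter_lt (hmaps : Set.MapsTo p ↑(V.erase m) ↑V)
    (hinj : Set.InjOn p ↑(V.erase m)) (hgt : ∀ v ∈ V.erase m, v < p v) (hw : w ∈ V) :
    Set.SurjOn p ↑((V.filter (w ≤ ·)).erase m) ↑(V.filter (w < ·)) := by
  have hsub : (V.filter (w ≤ ·)).erase m ⊆ V.erase m := erase_subset_erase _ (filter_subset _ _)
  refine surjOn_of_injOn_of_card_le p (fun u hu => ?_) (hinj.mono hsub)
    (card_filter_lt_le_card_filter_le_erase hw m)
  have hwu : w ≤ u := (mem_filter.mp (mem_of_mem_erase hu)).2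
  exact mem_filter.mpr ⟨hmaps (hsub hu), hwu.trans_lt (hgt u (hsub hu))⟩

lemma le_of_injOn_erase_of_lt (hmaps : Set.MapsTo p ↑(V.erase m) ↑V)
    (hinj : Set.InjOn p ↑(V.erase m)) (hgt : ∀ v ∈ V.erase m, v < p v)
    {v : α} (hv : v ∈ V.erase m) (hw : w ∈ V) (hvw : v < w) : p v ≤ w := by
  by_contra! hwp
  obtain ⟨u, hu, hpu⟩ := surjOn_filter_le_erase_filter_lt hmaps hinj hgt hw
    (mem_filter.mpr ⟨hmaps hv, hwp⟩ : p v ∈ V.filter (w < ·))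
  have huV : u ∈ V.erase m := erase_subset_erase _ (filter_subset _ _) hu
  have hwu : w ≤ u := (mem_filter.mp (mem_of_mem_erase hu)).2
  exact (hvw.trans_le hwu).ne (hinj hv huV hpu.symm)

lemma isLeast_of_injOn_erase (hmaps : Set.MapsTo p ↑(V.erase m) ↑V)
    (hinj : Set.InjOn p ↑(V.erase m)) (hgt : ∀ v ∈ V.erase m, v < p v)
    {v : α} (hv : v ∈ V.erase m) : IsLeast {w | w ∈ V ∧ v < w} (p v) :=
  ⟨⟨hmaps hv, hgt v hv⟩, fun _ hw => le_of_injOn_erase_of_lt hmaps hinj hgt hv hw.1 hw.2⟩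

end Finset

theorem stmt1_general {α : Type*} [LinearOrder α] (V : Finset α)
    (m : α) (p : α → α)
    (hmem : ∀ v ∈ V, v ≠ m → p v ∈ V)
    (hgt : ∀ v ∈ V, v ≠ m → v < p v)
    (hinj : ∀ v ∈ V, v ≠ m → ∀ w ∈ V, w ≠ m → p v = p w → v = w) :
    (∀ v ∈ V, v ≠ m → IsLeast {w | w ∈ V ∧ v < w} (p v)) ∧
    (∀ q : α → α,
      (∀ v ∈ V, v ≠ m → q v ∈ V) →
      (∀ v ∈ V, v ≠ m → v < q v) →
      (∀ v ∈ V, v ≠ m → ∀ w ∈ V, w ≠ m → q v = q w → v = w) →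
      ∀ v ∈ V, v ≠ m → q v = p v) := by
  have isLeast (q : α → α) (hqmem : ∀ v ∈ V, v ≠ m → q v ∈ V) (hqgt : ∀ v ∈ V, v ≠ m → v < q v)
      (hqinj : ∀ v ∈ V, v ≠ m → ∀ w ∈ V, w ≠ m → q v = q w → v = w) (v : α) (hv : v ∈ V)
      (hvm : v ≠ m) : IsLeast {w | w ∈ V ∧ v < w} (q v) :=
    isLeast_of_injOn_erase (m := m)
      (fun u hu => hqmem u (mem_of_mem_erase hu) (ne_of_mem_erase hu))
      (fun u hu w hw => hqinj u (mem_of_mem_erase hu) (ne_of_mem_erase hu)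
        w (mem_of_mem_erase hw) (ne_of_mem_erase hw))
      (fun u hu => hqgt u (mem_of_mem_erase hu) (ne_of_mem_erase hu)) (mem_erase.mpr ⟨hvm, hv⟩)
  exact ⟨isLeast p hmem hgt hinj, fun q hqmem hqgt hqinj v hv hvm =>
    (isLeast q hqmem hqgt hqinj v hv hvm).unique (isLeast p hmem hgt hinj v hv hvm)⟩

/-- If `p : V \ {m} → V` (with `m = max V`) is injective and satisfies `p v > v`, then
`p v` is the least element of `V` above `v` for every `v ∈ V \ {m}`; in particular any
two maps with these properties agree on `V \ {m}`, so the sorted-list structure of the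
legal state is uniquely determined by the node set. -/
theorem stmt1 {α : Type*} [LinearOrder α] (V : Finset α) (hV : V.Nonempty)
    (m : α) (hm : m = V.max' hV) (p : α → α)
    (hmem : ∀ v ∈ V, v ≠ m → p v ∈ V)
    (hgt : ∀ v ∈ V, v ≠ m → v < p v)
    (hinj : ∀ v ∈ V, v ≠ m → ∀ w ∈ V, w ≠ m → p v = p w → v = w) :
    (∀ v ∈ V, v ≠ m → IsLeast {w | w ∈ V ∧ v < w} (p v)) ∧
    (∀ q : α → α,
      (∀ v ∈ V, v ≠ m → q v ∈ V) →
      (∀ v ∈ V, v ≠ m → v < q v) →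
      (∀ v ∈ V, v ≠ m → ∀ w ∈ V, w ≠ m → q v = q w → v = w) →
      ∀ v ∈ V, v ≠ m → q v = p v) :=
  stmt1_general V m p hmem hgt hinj
end

section
/- One round of the linearization dynamics preserves the structure: the new map p' again satisfies the max-heap property (p'(v) > v whenever defined); p'(v) is defined if and only if p(v) is defined, so the set of heads is unchanged; and every node has the same head under p' as under p, so the partition of V into heaps is unchanged. -/
/-- `pIter p k v` is the `k`-fold iterate of the partial predecessor map `p` starting at `v`. -/
def pIter {α : Type*} (p : α → Option α) : ℕ → α → Option α
  | 0, v => some v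
  | k + 1, v => (p v).bind (pIter p k)

/-- The max-heap property: whenever `p v` is defined for `v ∈ V`, it is a node of `V`
strictly larger than `v`. -/
def HeapProp {α : Type*} [LinearOrder α] (V : Finset α) (p : α → Option α) : Prop :=
  ∀ v ∈ V, ∀ w, p v = some w → w ∈ V ∧ v < w

/-- One round of the linearization dynamics: every non-maximum child of a node `x`
gets the maximum child of `x` as its new predecessor; all other nodes keep their
predecessor. -/
def roundStep {α : Type*} [LinearOrder α] (V : Finset α) (p : α → Option α) :
    α → Option α := fun v =>
  match p v with
  | none => none
  | some x =>
    if h : (V.filter (fun w => p w = some x)).Nonempty then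
      if v = (V.filter (fun w => p w = some x)).max' h then some x
      else some ((V.filter (fun w => p w = some x)).max' h)
    else some x

/-!
A node `v` that is not its parent's maximum child is re-attached to that maximum child `m`,
which is a sibling of `v`, lies above `v`, and has the same parent; so `p'` again points upwards,
is defined exactly where `p` is, and the head reached from `v` through `m` is the head reached
through the old parent. Conversely, iterating `p'` from `v` terminates because `p'` is a heap
on the finite set `V`, and the head it reaches is a `p`-head of `v`, hence the unique one.
-/

section Head

variable {α : Type*} (p : α → Option α)

def IsHeadOf (v h : α) : Prop :=
  (∃ k, pIter p k v = some h) ∧ p h = none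

variable {p}

lemma isHeadOf_of_eq_none {v : α} (hv : p v = none) (h : α) : IsHeadOf p v h ↔ h = v := by
  refine ⟨fun ⟨⟨k, hk⟩, _⟩ => ?_, fun hh => ⟨⟨0, by rw [hh]; rfl⟩, hh ▸ hv⟩⟩
  cases k with
  | zero => exact (Option.some.inj hk).symm
  | succ k => simp [pIter, hv] at hk

lemma isHeadOf_of_eq_some {v x : α} (hv : p v = some x) (h : α) :
    IsHeadOf p v h ↔ IsHeadOf p x h := by
  constructor
  · rintro ⟨⟨k, hk⟩, hh⟩
    cases k with
    | zero => cases Option.some.inj hk; simp [hv] at hh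
    | succ k => exact ⟨⟨k, by simpa [pIter, hv] using hk⟩, hh⟩
  · rintro ⟨⟨k, hk⟩, hh⟩
    exact ⟨⟨k + 1, by simp [pIter, hv, hk]⟩, hh⟩

lemma IsHeadOf.unique {v h h' : α} (hh : IsHeadOf p v h) (hh' : IsHeadOf p v h') : h = h' := by
  obtain ⟨⟨k, hk⟩, hph⟩ := hh
  induction k generalizing v with
  | zero =>
    cases Option.some.inj hk
    exact ((isHeadOf_of_eq_none hph h').mp hh').symm
  | succ k ih =>
    cases hv : p v with
    | none => simp [pIter, hv] at hk
    | some x =>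
      exact ih ((isHeadOf_of_eq_some hv h').mp hh') (by simpa [pIter, hv] using hk)

lemma HeapProp.exists_isHeadOf [LinearOrder α] {V : Finset α} (hp : HeapProp V p) {v : α}
    (hv : v ∈ V) : ∃ h, IsHeadOf p v h := by
  refine (V.finite_toSet.wellFoundedOn (r := (· > ·))).induction hv
    (P := fun v => ∃ h, IsHeadOf p v h) fun v hv ih => ?_
  cases hpv : p v with
  | none => exact ⟨v, (isHeadOf_of_eq_none hpv v).mpr rfl⟩
  | some x =>
    obtain ⟨hx, hvx⟩ := hp v hv x hpv
    obtain ⟨h, hh⟩ := ih x hx hvx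
    exact ⟨h, (isHeadOf_of_eq_some hpv h).mpr hh⟩

end Head

section RoundStep

variable {α : Type*} [LinearOrder α] (V : Finset α) (p : α → Option α)

lemma roundStep_eq_none_iff (v : α) : roundStep V p v = none ↔ p v = none := by
  unfold roundStep
  cases p v with
  | none => simp
  | some x => simp only; split_ifs <;> simp

variable {V p}

lemma roundStep_eq_some {v x w : α} (hv : p v = some x) (hw : roundStep V p v = some w) :
    w = x ∨ (w ∈ V ∧ p w = some x ∧ (v ∈ V → v < w)) := by
  unfold roundStep at hw
  rw [hv] at hw
  simp only at hw
  split_ifs at hw with hne hmax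
  · exact .inl (Option.some.inj hw).symm
  · cases Option.some.inj hw
    have hmem := Finset.mem_filter.mp (Finset.max'_mem _ hne)
    refine .inr ⟨hmem.1, hmem.2, fun hvV => lt_of_le_of_ne ?_ hmax⟩
    exact Finset.le_max' _ v (Finset.mem_filter.mpr ⟨hvV, hv⟩)
  · exact .inl (Option.some.inj hw).symm

lemma HeapProp.roundStep (hp : HeapProp V p) : HeapProp V (roundStep V p) := by
  intro v hv w hw
  obtain ⟨x, hx⟩ := Option.ne_none_iff_exists'.mp
    (mt (roundStep_eq_none_iff V p v).mpr (by simp [hw]))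
  rcases roundStep_eq_some hx hw with rfl | ⟨hwV, -, hvw⟩
  · exact hp v hv w hx
  · exact ⟨hwV, hvw hv⟩

lemma isHeadOf_of_isHeadOf_roundStep {v h : α} (hh : IsHeadOf (roundStep V p) v h) :
    IsHeadOf p v h := by
  obtain ⟨⟨k, hk⟩, hph⟩ := hh
  induction k generalizing v with
  | zero =>
    obtain rfl : v = h := Option.some.inj hk
    exact (isHeadOf_of_eq_none ((roundStep_eq_none_iff V p v).mp hph) v).mpr rfl
  | succ k ih =>
    cases hw : roundStep V p v with
    | none => simp [pIter, hw] at hk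
    | some w =>
      have hwh := ih (by simpa [pIter, hw] using hk)
      obtain ⟨x, hx⟩ := Option.ne_none_iff_exists'.mp
        (mt (roundStep_eq_none_iff V p v).mpr (by simp [hw]))
      rw [isHeadOf_of_eq_some hx]
      rcases roundStep_eq_some hx hw with rfl | ⟨-, hwx, -⟩
      · exact hwh
      · exact (isHeadOf_of_eq_some hwx h).mp hwh

end RoundStep

/-- One round of the linearization dynamics preserves the structure: the new map again
satisfies the max-heap property, it is defined exactly where `p` is defined (so the heads
are unchanged), and every node has the same head as before (so the partition into heaps
is unchanged). -/
theorem stmt2 {α : Type*} [LinearOrder α] (V : Finset α) (p : α → Option α)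
    (hp : HeapProp V p) :
    HeapProp V (roundStep V p) ∧
    (∀ v ∈ V, (roundStep V p v = none ↔ p v = none)) ∧
    (∀ v ∈ V, ∀ h : α,
      ((∃ k, pIter p k v = some h) ∧ p h = none) ↔
      ((∃ k, pIter (roundStep V p) k v = some h) ∧ roundStep V p h = none)) := by
  refine ⟨hp.roundStep, fun v _ => roundStep_eq_none_iff V p v, fun v hv h => ?_⟩
  change IsHeadOf p v h ↔ IsHeadOf (roundStep V p) v h
  refine ⟨fun hh => ?_, isHeadOf_of_isHeadOf_roundStep⟩
  obtain ⟨u, hu⟩ := hp.roundStep.exists_isHeadOf hv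
  rwa [← (isHeadOf_of_isHeadOf_roundStep hu).unique hh]
end

section
/- Let u_1 > u_2 > ⋯ > u_{|H|} be the elements of a heap H listed in descending order (so u_1 is the head of H). Then for every i, after at most i rounds of the linearization dynamics the heap on the vertex set H is linearized with respect to u_i. -/
/-- `H` is the heap with head `h`: `h` is a head, and `H` consists exactly of the nodes of
`V` from which iterating `p` reaches `h`. -/
def IsHeap {α : Type*} (V : Finset α) (p : α → Option α) (H : Finset α) (h : α) : Prop :=
  h ∈ V ∧ p h = none ∧ ∀ v, v ∈ H ↔ v ∈ V ∧ ∃ k, pIter p k v = some h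

/-- The heap `H` with head `h` is linearized with respect to `u`: every non-head node
`v ∈ H` with `v ≥ u` is the maximum among all nodes with the same predecessor. -/
def LinearizedWrt {α : Type*} [LinearOrder α] (V : Finset α) (p : α → Option α)
    (H : Finset α) (h u : α) : Prop :=
  ∀ v ∈ H, v ≠ h → u ≤ v → ∀ w ∈ V, p w = p v → w ≤ v

/-!
After `t` rounds the following holds: every non-head node `v` of the heap has a parent `x`
in the heap which is either the successor of `v` in `H` or has at least `t` nodes of `H`
above it. A round preserves this. A non-maximal child of `x` moves to the maximal child
`m < x`, which has one more node above it than `x`. The maximal child `v` keeps `x`; if `x`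
has at most `t` nodes above it but is not the successor of `v`, then the predecessor
`s > v` of `x` in `H` has at most `t + 1` nodes above it, so its parent is already `x`,
contradicting the maximality of `v`.

The node `u_i` has `i` nodes of `H` at or above it, so after `i` rounds every `v ≥ u_i` is
attached to its successor; two such nodes cannot share a parent.
-/

section

open Finset

variable {α : Type*} [LinearOrder α]

structure IsSuccIn (H : Finset α) (v x : α) : Prop where
  mem : x ∈ H
  lt : v < x
  le : ∀ w ∈ H, v < w → x ≤ w

namespace IsSuccIn

variable {H : Finset α} {v x y : α}

lemma unique (hx : IsSuccIn H v x) (hy : IsSuccIn H v y) : x = y :=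
  le_antisymm (hx.le y hy.mem hy.lt) (hy.le x hx.mem hx.lt)

lemma filter_lt_eq (hx : IsSuccIn H v x) : {w ∈ H | v < w} = insert x {w ∈ H | x < w} := by
  ext w
  simp only [mem_filter, mem_insert]
  constructor
  · rintro ⟨hw, hvw⟩
    rcases (hx.le w hw hvw).eq_or_lt with rfl | hxw
    · exact Or.inl rfl
    · exact Or.inr ⟨hw, hxw⟩
  · rintro (rfl | ⟨hw, hxw⟩)
    · exact ⟨hx.mem, hx.lt⟩
    · exact ⟨hw, hx.lt.trans hxw⟩

lemma card_filter_lt (hx : IsSuccIn H v x) : #{w ∈ H | v < w} = #{w ∈ H | x < w} + 1 := by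
  rw [hx.filter_lt_eq, card_insert_of_notMem (by simp)]

end IsSuccIn

section Rank

variable {H : Finset α} {v x : α}

lemma insert_filter_lt_subset (hx : x ∈ H) (hvx : v < x) :
    insert x {w ∈ H | x < w} ⊆ {w ∈ H | v < w} := by
  intro w hw
  simp only [mem_insert, mem_filter] at hw ⊢
  rcases hw with rfl | ⟨hw, hxw⟩
  · exact ⟨hx, hvx⟩
  · exact ⟨hw, hvx.trans hxw⟩

lemma card_filter_lt_lt (hx : x ∈ H) (hvx : v < x) :
    #{w ∈ H | x < w} < #{w ∈ H | v < w} := by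
  have := card_le_card (insert_filter_lt_subset hx hvx)
  rwa [card_insert_of_notMem (by simp)] at this

lemma card_filter_lt_le_card_filter_le {u v : α} (huv : u ≤ v) :
    #{w ∈ H | v < w} ≤ #{w ∈ H | u ≤ w} :=
  card_le_card (monotone_filter_right H fun _ _ hvw => (huv.trans_lt hvw).le)

lemma isSuccIn_of_card_filter_lt_le (hx : x ∈ H) (hvx : v < x)
    (hcard : #{w ∈ H | v < w} ≤ #{w ∈ H | x < w} + 1) : IsSuccIn H v x := by
  have heq : insert x {w ∈ H | x < w} = {w ∈ H | v < w} := by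
    refine eq_of_subset_of_card_le (insert_filter_lt_subset hx hvx) ?_
    rwa [card_insert_of_notMem (by simp)]
  refine ⟨hx, hvx, fun w hw hvw => ?_⟩
  have : w ∈ insert x {w ∈ H | x < w} := heq ▸ mem_filter.2 ⟨hw, hvw⟩
  rcases mem_insert.1 this with rfl | hw'
  · exact le_rfl
  · exact (mem_filter.1 hw').2.le

lemma exists_le_isSuccIn (hv : v ∈ H) (hx : x ∈ H) (hvx : v < x) :
    ∃ s ∈ H, v ≤ s ∧ IsSuccIn H s x := by
  have hne : {w ∈ H | w < x}.Nonempty := ⟨v, mem_filter.2 ⟨hv, hvx⟩⟩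
  obtain ⟨hsH, hsx⟩ := mem_filter.1 (max'_mem _ hne)
  refine ⟨_, hsH, le_max' _ v (mem_filter.2 ⟨hv, hvx⟩), hx, hsx, fun w hw hsw => ?_⟩
  by_contra! hwx
  exact (le_max' _ w (mem_filter.2 ⟨hw, hwx⟩)).not_gt hsw

end Rank

section RoundStep

variable {V : Finset α} {q : α → Option α} {v x : α}

lemma roundStep_of_eq_none (hqv : q v = none) : roundStep V q v = none := by
  simp [roundStep, hqv]

lemma exists_roundStep_eq_of_eq_some (hv : v ∈ V) (hqv : q v = some x) :
    ∃ m ∈ V, q m = some x ∧ (∀ w ∈ V, q w = some x → w ≤ m) ∧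
      roundStep V q v = some (if v = m then x else m) := by
  have hne : {w ∈ V | q w = some x}.Nonempty := ⟨v, mem_filter.2 ⟨hv, hqv⟩⟩
  obtain ⟨hmV, hqm⟩ := mem_filter.1 (max'_mem _ hne)
  refine ⟨_, hmV, hqm, fun w hw hqw => le_max' _ w (mem_filter.2 ⟨hw, hqw⟩), ?_⟩
  simp only [roundStep, hqv, dif_pos hne]
  split_ifs <;> rfl

end RoundStep

structure LinInvariant (V H : Finset α) (h : α) (t : ℕ) (q : α → Option α) : Prop where
  subset : H ⊆ V
  head : q h = none
  closed : ∀ w ∈ V, ∀ x ∈ H, q w = some x → w ∈ H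
  parent : ∀ v ∈ H, v ≠ h → ∃ x, q v = some x ∧ x ∈ H ∧ v < x ∧
    (IsSuccIn H v x ∨ t ≤ #{w ∈ H | x < w})

namespace LinInvariant

variable {V H : Finset α} {h : α} {t : ℕ} {q : α → Option α}

lemma ne_head_of_eq_some (hinv : LinInvariant V H h t q) {v x : α} (hqv : q v = some x) :
    v ≠ h := by
  rintro rfl
  simp [hinv.head] at hqv

lemma le_head (hinv : LinInvariant V H h t q) {v : α} (hv : v ∈ H) : v ≤ h := by
  have hne : H.Nonempty := ⟨v, hv⟩
  suffices H.max' hne = h from this ▸ le_max' H v hv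
  by_contra hmh
  obtain ⟨x, -, hx, hmx, -⟩ := hinv.parent _ (max'_mem H hne) hmh
  exact (le_max' H x hx).not_gt hmx

lemma exists_isSuccIn (hinv : LinInvariant V H h t q) {v : α} (hv : v ∈ H) (hvh : v ≠ h)
    (hcard : #{w ∈ H | v < w} ≤ t + 1) : ∃ x, q v = some x ∧ IsSuccIn H v x := by
  obtain ⟨x, hqv, hx, hvx, hsucc | hrank⟩ := hinv.parent v hv hvh
  · exact ⟨x, hqv, hsucc⟩
  · exact ⟨x, hqv, isSuccIn_of_card_filter_lt_le hx hvx (by omega)⟩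

lemma closed_roundStep (hinv : LinInvariant V H h t q) :
    ∀ w ∈ V, ∀ x ∈ H, roundStep V q w = some x → w ∈ H := by
  intro w hw x hx hrw
  cases hqw : q w with
  | none => simp [roundStep_of_eq_none hqw] at hrw
  | some y =>
    obtain ⟨m, -, hqm, -, hrw'⟩ := exists_roundStep_eq_of_eq_some hw hqw
    rw [hrw', Option.some_inj] at hrw
    suffices y ∈ H from hinv.closed w hw y this hqw
    split_ifs at hrw with hwm
    · exact hrw ▸ hx
    · subst hrw
      obtain ⟨y', hqm', hy', -⟩ := hinv.parent m hx (hinv.ne_head_of_eq_some hqm)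
      obtain rfl : y = y' := by simpa [hqm] using hqm'
      exact hy'

lemma isSuccIn_of_forall_child_le (hinv : LinInvariant V H h t q) {v x : α} (hv : v ∈ H)
    (hx : x ∈ H) (hvx : v < x) (hrank : #{w ∈ H | x < w} ≤ t)
    (hmax : ∀ w ∈ V, q w = some x → w ≤ v) : IsSuccIn H v x := by
  obtain ⟨s, hs, hvs, hsx⟩ := exists_le_isSuccIn hv hx hvx
  obtain rfl | hvs := hvs.eq_or_lt
  · exact hsx
  have hsh : s ≠ h := (hsx.lt.trans_le (hinv.le_head hx)).ne
  obtain ⟨x', hqs, hsx'⟩ := hinv.exists_isSuccIn hs hsh (by rw [hsx.card_filter_lt]; omega)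
  rw [hsx'.unique hsx] at hqs
  exact absurd (hmax s (hinv.subset hs) hqs) hvs.not_ge

lemma parent_roundStep (hinv : LinInvariant V H h t q) {v : α} (hv : v ∈ H) (hvh : v ≠ h) :
    ∃ x, roundStep V q v = some x ∧ x ∈ H ∧ v < x ∧
      (IsSuccIn H v x ∨ t + 1 ≤ #{w ∈ H | x < w}) := by
  obtain ⟨x, hqv, hx, hvx, hd⟩ := hinv.parent v hv hvh
  obtain ⟨m, hmV, hqm, hmax, hrv⟩ := exists_roundStep_eq_of_eq_some (hinv.subset hv) hqv
  have hm : m ∈ H := hinv.closed m hmV x hx hqm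
  have hmx : m < x := by
    obtain ⟨x', hqm', -, hmx', -⟩ := hinv.parent m hm (hinv.ne_head_of_eq_some hqm)
    obtain rfl : x = x' := by simpa [hqm] using hqm'
    exact hmx'
  rw [hrv]
  split_ifs with hvm
  · subst hvm
    refine ⟨x, rfl, hx, hvx, ?_⟩
    rcases hd with hsucc | hrank
    · exact Or.inl hsucc
    rcases lt_or_ge t #{w ∈ H | x < w} with hlt | hge
    · exact Or.inr hlt
    · exact Or.inl (hinv.isSuccIn_of_forall_child_le hv hx hvx hge hmax)
  · have hvm : v < m := (hmax v (hinv.subset hv) hqv).lt_of_ne hvm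
    refine ⟨m, rfl, hm, hvm, Or.inr ?_⟩
    rcases hd with hsucc | hrank
    · exact absurd (hsucc.le m hm hvm) hmx.not_ge
    · have := card_filter_lt_lt hx hmx
      omega

lemma step (hinv : LinInvariant V H h t q) : LinInvariant V H h (t + 1) (roundStep V q) :=
  ⟨hinv.subset, roundStep_of_eq_none hinv.head, hinv.closed_roundStep,
    fun _ hv hvh => hinv.parent_roundStep hv hvh⟩

lemma iterate (hinv : LinInvariant V H h t q) (n : ℕ) :
    LinInvariant V H h (t + n) ((fun q => roundStep V q)^[n] q) := by
  induction n with
  | zero => exact hinv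
  | succ n ih =>
    rw [Function.iterate_succ_apply']
    exact ih.step

lemma linearizedWrt (hinv : LinInvariant V H h t q) {u : α} (hu : #{v ∈ H | u ≤ v} ≤ t) :
    LinearizedWrt V q H h u := by
  intro v hv hvh huv w hw hqw
  have hrank (z : α) (hvz : v ≤ z) : #{y ∈ H | z < y} ≤ t + 1 := by
    have := card_filter_lt_le_card_filter_le (H := H) (huv.trans hvz)
    omega
  obtain ⟨x, hqv, hvx⟩ := hinv.exists_isSuccIn hv hvh (hrank v le_rfl)
  by_contra! hvw
  rw [hqv] at hqw
  have hwH := hinv.closed w hw x hvx.mem hqw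
  obtain ⟨x', hqw', hwx'⟩ :=
    hinv.exists_isSuccIn hwH (hinv.ne_head_of_eq_some hqw) (hrank w hvw.le)
  obtain rfl : x = x' := by simpa [hqw] using hqw'
  exact (hvx.le w hwH hvw).not_gt hwx'.lt

end LinInvariant

lemma linInvariant_zero {V H : Finset α} {p : α → Option α} {h : α} (hp : HeapProp V p)
    (hheap : IsHeap V p H h) : LinInvariant V H h 0 p := by
  obtain ⟨-, hph, hmem⟩ := hheap
  refine ⟨fun v hv => ((hmem v).1 hv).1, hph, fun w hw x hx hpw => ?_, fun v hv hvh => ?_⟩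
  · obtain ⟨-, k, hk⟩ := (hmem x).1 hx
    exact (hmem w).2 ⟨hw, k + 1, by simp [pIter, hpw, hk]⟩
  · obtain ⟨hvV, k | k, hk⟩ := (hmem v).1 hv
    · simp only [pIter, Option.some_inj] at hk
      exact absurd hk hvh
    · obtain ⟨x, hpv, hk⟩ := Option.bind_eq_some_iff.1 hk
      obtain ⟨hxV, hvx⟩ := hp v hvV x hpv
      exact ⟨x, hpv, (hmem x).2 ⟨hxV, k, hk⟩, hvx, Or.inr (Nat.zero_le _)⟩

end

/-- The node `u_i` is the `u ∈ H` with `#{v ∈ H | u ≤ v} = i`. -/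
theorem stmt3 {α : Type*} [LinearOrder α] (V : Finset α) (p : α → Option α)
    (hp : HeapProp V p) (H : Finset α) (h : α) (hheap : IsHeap V p H h) :
    ∀ u ∈ H, ∀ i : ℕ, (H.filter (fun v => u ≤ v)).card ≤ i →
      LinearizedWrt V ((fun q => roundStep V q)^[i] p) H h u := by
  intro u _ i hi
  have hinv := (linInvariant_zero hp hheap).iterate i
  rw [zero_add] at hinv
  exact hinv.linearizedWrt hi
end

section
/- Any heap H becomes a sorted list after at most |H| rounds of the linearization dynamics; that is, after |H| rounds, every non-head node v ∈ H is the unique (hence maximum) child of its predecessor, and the predecessor links form a descending chain through all elements of H. -/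
/-!
Number the nodes of `H` downwards by `rank`, the head having rank `0`. After `i` rounds every
link from a node of rank `r` ends at rank at least `min r i - 1`: a maximum child whose parent
has rank `i - 1` would lie below the node of rank `i`, which by induction is itself a child of
that parent, and a redirected node moves to a sibling, whose rank exceeds that of its old parent.
Since links always go up, a node of rank `r ≤ i` is then linked to the node of rank `r - 1`, so
after `|H|` rounds the heap is the sorted chain.
-/

namespace Linearization

open Finset

lemma pIter_succ_of_eq_some {α : Type*} (p : α → Option α) (k : ℕ) (v x : α)
    (hx : p v = some x) : pIter p (k + 1) v = pIter p k x := by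
  simp [pIter, hx]

variable {α : Type*} [LinearOrder α]

section Rank

variable (H : Finset α)

def rank (v : α) : ℕ := #{w ∈ H | v < w}

variable {H}

lemma rank_lt_rank_of_lt {v w : α} (hw : w ∈ H) (hvw : v < w) : rank H w < rank H v :=
  card_lt_card <| (ssubset_iff_of_subset
    (monotone_filter_right H fun _ _ => hvw.trans)).2
    ⟨w, mem_filter.2 ⟨hw, hvw⟩, fun hw' => lt_irrefl w (mem_filter.1 hw').2⟩

lemma le_of_rank_le_rank {v w : α} (hw : w ∈ H) (hle : rank H v ≤ rank H w) : w ≤ v :=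
  not_lt.1 fun hvw => (rank_lt_rank_of_lt hw hvw).not_ge hle

lemma rank_le_rank_of_le {v w : α} (hvw : v ≤ w) : rank H w ≤ rank H v :=
  card_le_card <| monotone_filter_right H fun _ _ => hvw.trans_lt

lemma rank_injOn : Set.InjOn (rank H) H := fun _ hv _ hw hvw =>
  le_antisymm (le_of_rank_le_rank hv hvw.ge) (le_of_rank_le_rank hw hvw.le)

lemma rank_lt_card {v : α} (hv : v ∈ H) : rank H v < #H :=
  card_lt_card <| filter_ssubset.2 ⟨v, hv, lt_irrefl v⟩

lemma rank_eq_zero {h : α} (hmax : ∀ v ∈ H, v ≤ h) : rank H h = 0 :=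
  card_eq_zero.2 <| filter_eq_empty_iff.2 fun v hv => not_lt.2 (hmax v hv)

lemma exists_rank_eq {r : ℕ} (hr : r < #H) : ∃ v ∈ H, rank H v = r := by
  have himage : H.image (rank H) = range #H :=
    eq_of_subset_of_card_le (fun _ hr => by
      obtain ⟨v, hv, rfl⟩ := mem_image.1 hr
      exact mem_range.2 (rank_lt_card hv))
      (by rw [card_range, card_image_of_injOn rank_injOn])
  simpa using himage.ge (mem_range.2 hr)

end Rank

lemma roundStep_eq_none {V : Finset α} {p : α → Option α} {v : α} (hv : p v = none) :
    roundStep V p v = none := by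
  simp [roundStep, hv]

lemma exists_roundStep_eq {V : Finset α} {p : α → Option α} {v x : α} (hv : v ∈ V)
    (hx : p v = some x) :
    ∃ m ∈ V, p m = some x ∧ (∀ w ∈ V, p w = some x → w ≤ m) ∧
      roundStep V p v = some (if v = m then x else m) := by
  have hC : (V.filter fun w => p w = some x).Nonempty := ⟨v, mem_filter.2 ⟨hv, hx⟩⟩
  obtain ⟨hmV, hmx⟩ := mem_filter.1 (max'_mem _ hC)
  refine ⟨_, hmV, hmx, fun w hw hwx => le_max' _ w (mem_filter.2 ⟨hw, hwx⟩), ?_⟩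
  simp only [roundStep, hx, dif_pos hC]
  split_ifs <;> rfl

lemma le_of_pIter_eq_some {V : Finset α} {p : α → Option α} (hp : HeapProp V p) :
    ∀ k {v w : α}, v ∈ V → pIter p k v = some w → v ≤ w
  | 0, _, _, _, hk => (Option.some_injective _ hk).le
  | k + 1, v, w, hv, hk => by
    cases hx : p v with
    | none => simp [pIter, hx] at hk
    | some x =>
      rw [pIter_succ_of_eq_some p k v x hx] at hk
      exact ((hp v hv x hx).2.trans_le (le_of_pIter_eq_some hp k (hp v hv x hx).1 hk)).le

/-- The properties of a heap that one round preserves; the paths to the head, which `IsHeap`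
records, are recovered at the end from ranks. -/
structure IsHeapComponent (V : Finset α) (p : α → Option α) (H : Finset α) (h : α) :
    Prop where
  heapProp : HeapProp V p
  subset : H ⊆ V
  head_mem : h ∈ H
  le_head : ∀ v ∈ H, v ≤ h
  head_eq_none : p h = none
  exists_parent : ∀ v ∈ H, v ≠ h → ∃ x, p v = some x
  mem_iff : ∀ v ∈ V, ∀ x, p v = some x → (v ∈ H ↔ x ∈ H)

namespace IsHeapComponent

variable {V : Finset α} {p : α → Option α} {H : Finset α} {h : α}

lemma of_isHeap (hp : HeapProp V p) (hH : IsHeap V p H h) : IsHeapComponent V p H h where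
  heapProp := hp
  subset _ hv := ((hH.2.2 _).1 hv).1
  head_mem := (hH.2.2 h).2 ⟨hH.1, 0, rfl⟩
  le_head v hv := by
    obtain ⟨hvV, k, hk⟩ := (hH.2.2 v).1 hv
    exact le_of_pIter_eq_some hp k hvV hk
  head_eq_none := hH.2.1
  exists_parent v hv hvh := by
    obtain ⟨-, k, hk⟩ := (hH.2.2 v).1 hv
    cases k with
    | zero => exact absurd (Option.some_injective _ hk) hvh
    | succ k => exact Option.ne_none_iff_exists'.1 fun hnone => by simp [pIter, hnone] at hk
  mem_iff v hv x hx := by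
    rw [hH.2.2, hH.2.2, and_iff_right hv, and_iff_right (hp v hv x hx).1]
    constructor
    · rintro ⟨k, hk⟩
      cases k with
      | zero => cases hk; simp [hH.2.1] at hx
      | succ k => exact ⟨k, pIter_succ_of_eq_some p k v x hx ▸ hk⟩
    · rintro ⟨k, hk⟩
      exact ⟨k + 1, pIter_succ_of_eq_some p k v x hx ▸ hk⟩

variable (hq : IsHeapComponent V p H h)
include hq

lemma parent_mem {v x : α} (hv : v ∈ H) (hx : p v = some x) : x ∈ H ∧ v < x :=
  ⟨(hq.mem_iff v (hq.subset hv) x hx).1 hv, (hq.heapProp v (hq.subset hv) x hx).2⟩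

lemma child_mem {w x : α} (hx : x ∈ H) (hw : w ∈ V) (hwx : p w = some x) : w ∈ H :=
  (hq.mem_iff w hw x hwx).2 hx

lemma rank_head : rank H h = 0 := rank_eq_zero hq.le_head

lemma roundStep : IsHeapComponent V (roundStep V p) H h where
  heapProp v hv z hz := by
    cases hx : p v with
    | none => simp [roundStep_eq_none hx] at hz
    | some x =>
      obtain ⟨m, hmV, -, hmax, hvm⟩ := exists_roundStep_eq hv hx
      rw [hvm, Option.some_inj] at hz
      split_ifs at hz with hveq
      · exact hz ▸ hq.heapProp v hv x hx
      · exact hz ▸ ⟨hmV, (hmax v hv hx).lt_of_ne hveq⟩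
  subset := hq.subset
  head_mem := hq.head_mem
  le_head := hq.le_head
  head_eq_none := roundStep_eq_none hq.head_eq_none
  exists_parent v hv hvh := by
    obtain ⟨x, hx⟩ := hq.exists_parent v hv hvh
    obtain ⟨m, -, -, -, hvm⟩ := exists_roundStep_eq (hq.subset hv) hx
    exact ⟨_, hvm⟩
  mem_iff v hv z hz := by
    cases hx : p v with
    | none => simp [roundStep_eq_none hx] at hz
    | some x =>
      obtain ⟨m, hmV, hmx, -, hvm⟩ := exists_roundStep_eq hv hx
      rw [hvm, Option.some_inj] at hz
      rw [hq.mem_iff v hv x hx]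
      split_ifs at hz
      · rw [hz]
      · rw [← hz, hq.mem_iff m hmV x hmx]

end IsHeapComponent

/-- After `i` rounds, every node of rank at most `i` points to the node of rank one less, and
every parent has rank at least `i - 1`. -/
def RankBound (p : α → Option α) (H : Finset α) (i : ℕ) : Prop :=
  ∀ v ∈ H, ∀ x, p v = some x → min (rank H v) i ≤ rank H x + 1

section RankBound

variable {V : Finset α} {p : α → Option α} {H : Finset α} {h : α}

lemma rank_parent_add_one {i : ℕ} (hq : IsHeapComponent V p H h) (hb : RankBound p H i)
    {v x : α} (hv : v ∈ H) (hx : p v = some x) (hvi : rank H v ≤ i) :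
    rank H x + 1 = rank H v := by
  obtain ⟨hxH, hvx⟩ := hq.parent_mem hv hx
  have := hb v hv x hx
  have := rank_lt_rank_of_lt hxH hvx
  omega

lemma RankBound.roundStep {i : ℕ} (hq : IsHeapComponent V p H h) (hb : RankBound p H i) :
    RankBound (roundStep V p) H (i + 1) := by
  intro v hv z hz
  cases hx : p v with
  | none => simp [roundStep_eq_none hx] at hz
  | some x =>
    obtain ⟨hxH, -⟩ := hq.parent_mem hv hx
    obtain ⟨m, hmV, hmx, hmax, hvm⟩ := exists_roundStep_eq (hq.subset hv) hx
    have hvx_rank := hb v hv x hx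
    rw [hvm, Option.some_inj] at hz
    split_ifs at hz with hveq
    · subst hz
      by_contra! hlt
      -- Otherwise the node `b` of rank `i` is a child of `x` above `v`, so `v` is not the
      -- maximum child.
      obtain ⟨b, hbH, hbi⟩ :=
        exists_rank_eq (H := H) (r := i) ((by omega : i < rank H v).trans (rank_lt_card hv))
      have hbh : b ≠ h := fun hbh => by rw [hbh, hq.rank_head] at hbi; omega
      obtain ⟨y, hy⟩ := hq.exists_parent b hbH hbh
      have hyx : y = x := rank_injOn (hq.parent_mem hbH hy).1 hxH
        (by have := rank_parent_add_one hq hb hbH hy hbi.le; omega)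
      have hbv : b ≤ v := hveq ▸ hmax b (hq.subset hbH) (hyx ▸ hy)
      have := rank_le_rank_of_le (H := H) hbv
      omega
    · subst hz
      have := rank_lt_rank_of_lt hxH (hq.heapProp m hmV x hmx).2
      omega

lemma isHeapComponent_rankBound_iterate (hq : IsHeapComponent V p H h) (i : ℕ) :
    IsHeapComponent V ((fun q => roundStep V q)^[i] p) H h ∧
      RankBound ((fun q => roundStep V q)^[i] p) H i := by
  induction i with
  | zero => exact ⟨hq, fun _ _ _ _ => by omega⟩
  | succ i ih =>
    rw [Function.iterate_succ_apply']
    exact ⟨ih.1.roundStep, ih.2.roundStep ih.1⟩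

/-- Each non-head node of `H` points to the next larger node of `H`. -/
def IsSortedList (p : α → Option α) (H : Finset α) (h : α) : Prop :=
  ∀ v ∈ H, v ≠ h → ∃ x, p v = some x ∧ rank H x + 1 = rank H v

lemma RankBound.isSortedList {i : ℕ} (hq : IsHeapComponent V p H h) (hb : RankBound p H i)
    (hi : #H ≤ i) : IsSortedList p H h := fun v hv hvh => by
  obtain ⟨x, hx⟩ := hq.exists_parent v hv hvh
  exact ⟨x, hx, rank_parent_add_one hq hb hv hx ((rank_lt_card hv).le.trans hi)⟩

end RankBound

namespace IsSortedList

variable {V : Finset α} {p : α → Option α} {H : Finset α} {h : α} (hs : IsSortedList p H h)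
include hs

lemma eq_of_parent_eq {v w : α} (hv : v ∈ H) (hvh : v ≠ h) (hw : w ∈ H) (hwh : w ≠ h)
    (hwv : p w = p v) : w = v := by
  obtain ⟨x, hx, hxv⟩ := hs v hv hvh
  obtain ⟨y, hy, hyw⟩ := hs w hw hwh
  rw [hx, hy, Option.some_inj] at hwv
  exact rank_injOn hw hv (by rw [← hxv, ← hyw, hwv])

variable (hq : IsHeapComponent V p H h)
include hq

lemma linearizedWrt (u : α) : LinearizedWrt V p H h u := by
  intro v hv hvh _ w hw hwv
  obtain ⟨x, hx, hxv⟩ := hs v hv hvh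
  rw [hx] at hwv
  obtain ⟨hxH, -⟩ := hq.parent_mem hv hx
  have hwH := hq.child_mem hxH hw hwv
  have := rank_lt_rank_of_lt hxH (hq.parent_mem hwH hwv).2
  exact le_of_rank_le_rank hwH (by omega)

lemma exists_pIter_eq {y v : α} (hy : y ∈ H) (hv : v ∈ H) (hvy : rank H v ≤ rank H y) :
    ∃ k, pIter p k y = some v := by
  induction hn : rank H y - rank H v generalizing y with
  | zero => exact ⟨0, congrArg some (rank_injOn hy hv (by omega))⟩
  | succ n ih =>
    have hyh : y ≠ h := fun hyh => by rw [hyh, hq.rank_head] at hn; omega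
    obtain ⟨x, hx, hxy⟩ := hs y hy hyh
    obtain ⟨k, hk⟩ := ih (hq.parent_mem hy hx).1 (by omega) (by omega)
    exact ⟨k + 1, pIter_succ_of_eq_some p k y x hx ▸ hk⟩

end IsSortedList

end Linearization

/-- Any heap `H` becomes a sorted list after at most `|H|` rounds of the linearization
dynamics: after `|H|` rounds the heap is linearized with respect to its minimum element,
every non-head node of `H` is the unique (hence maximum) child of its predecessor, and the
predecessor links form a chain running through all elements of `H` (every element of `H` is
reached by iterating the predecessor map from the minimum). -/
theorem stmt5 {α : Type*} [LinearOrder α] (V : Finset α) (p : α → Option α)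
    (hp : HeapProp V p) (H : Finset α) (h : α) (hheap : IsHeap V p H h)
    (hne : H.Nonempty) :
    ∀ i : ℕ, H.card ≤ i →
      LinearizedWrt V ((fun q => roundStep V q)^[i] p) H h (H.min' hne) ∧
      (∀ v ∈ H, v ≠ h → ∀ w ∈ H, w ≠ h →
        (fun q => roundStep V q)^[i] p w = (fun q => roundStep V q)^[i] p v → w = v) ∧
      (∀ v ∈ H, ∃ k : ℕ,
        pIter ((fun q => roundStep V q)^[i] p) k (H.min' hne) = some v) := by
  intro i hi
  obtain ⟨hq, hb⟩ := Linearization.isHeapComponent_rankBound_iterate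
    (Linearization.IsHeapComponent.of_isHeap hp hheap) i
  have hs := hb.isSortedList hq hi
  exact ⟨hs.linearizedWrt hq _, fun v hv hvh w hw hwh => hs.eq_of_parent_eq hv hvh hw hwh,
    fun v hv => hs.exists_pIter_eq hq (H.min'_mem hne) hv
      (Linearization.rank_le_rank_of_le (H.min'_le v hv))⟩
end

section
/- The potential ω strictly decreases under each of the replacement operations performed by the algorithm on an s-edge (x, y) with x ≠ y: (a) if x > y then ω(y, x) < ω(x, y) (reversing the edge after a scan-acknowledgement); (b) if q is any node with q > x then ω(q, y) < ω(x, y) (forwarding the edge endpoint to a predecessor); (c) if z is any node with z > x and z > y then both ω(x, z) < ω(x, y) and ω(y, z) < ω(x, y) (replacing the edge by edges to a larger known node). -/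
/-- The rank of a node `x` among the nodes `V`, sorted in decreasing order of identifier:
the maximum identifier has rank `0`. -/
def ordOf {α : Type*} [LinearOrder α] (V : Finset α) (x : α) : ℕ :=
  (V.filter (fun w => x < w)).card

/-- The potential `ω(x, y) = 2·ord(x) + 2·ord(y) + K(x, y)` of an ordered pair of nodes,
where `K(x, y) = 1` if `x > y` and `0` otherwise. -/
def omegaPot {α : Type*} [LinearOrder α] (V : Finset α) (x y : α) : ℕ :=
  2 * ordOf V x + 2 * ordOf V y + (if y < x then 1 else 0)

/-!
Reversing a descending edge only clears the tie-break bit `K`. Every other operation replaces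
an endpoint by a strictly larger node of `V`, which lowers the rank sum `ord x + ord y` by at
least one, hence the even part of `ω` by at least two, more than the tie-break bit can make up.
-/

section Potential

variable {α : Type*} [LinearOrder α] (V : Finset α)

lemma ordOf_lt_ordOf {a b : α} (hb : b ∈ V) (hab : a < b) : ordOf V b < ordOf V a := by
  refine Finset.card_lt_card <| (Finset.ssubset_iff_of_subset ?_).2 ⟨b, ?_, ?_⟩
  · exact Finset.monotone_filter_right V fun _ _ => hab.trans
  · exact Finset.mem_filter.2 ⟨hb, hab⟩
  · simp

lemma omegaPot_lt_omegaPot_of_lt {x y : α} (h : y < x) : omegaPot V y x < omegaPot V x y := by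
  simp only [omegaPot, if_pos h, if_neg h.not_gt]
  omega

lemma omegaPot_lt_omegaPot_of_ordOf_add_lt {a b x y : α}
    (h : ordOf V a + ordOf V b < ordOf V x + ordOf V y) : omegaPot V a b < omegaPot V x y := by
  unfold omegaPot
  split_ifs <;> omega

end Potential

theorem stmt8_general {α : Type*} [LinearOrder α] (V : Finset α)
    (x y : α) :
    (x > y → omegaPot V y x < omegaPot V x y) ∧
    (∀ q ∈ V, q > x → omegaPot V q y < omegaPot V x y) ∧
    (∀ z ∈ V, z > x → z > y →
      omegaPot V x z < omegaPot V x y ∧ omegaPot V y z < omegaPot V x y) := by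
  refine ⟨omegaPot_lt_omegaPot_of_lt V, fun q hq hqx => ?_, fun z hz hzx hzy => ⟨?_, ?_⟩⟩
  · have := ordOf_lt_ordOf V hq hqx
    exact omegaPot_lt_omegaPot_of_ordOf_add_lt V (by omega)
  · have := ordOf_lt_ordOf V hz hzy
    exact omegaPot_lt_omegaPot_of_ordOf_add_lt V (by omega)
  · have := ordOf_lt_ordOf V hz hzx
    exact omegaPot_lt_omegaPot_of_ordOf_add_lt V (by omega)

/-- The potential `ω` strictly decreases under each replacement operation performed by the
algorithm on an s-edge `(x, y)` with `x ≠ y`: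
(a) if `x > y` then `ω(y, x) < ω(x, y)` (reversing the edge after a scan-acknowledgement);
(b) if `q > x` then `ω(q, y) < ω(x, y)` (forwarding the edge endpoint to a predecessor);
(c) if `z > x` and `z > y` then `ω(x, z) < ω(x, y)` and `ω(y, z) < ω(x, y)` (replacing the
edge by edges to a larger known node). -/
theorem stmt8 {α : Type*} [LinearOrder α] (V : Finset α)
    (x y : α) (hx : x ∈ V) (hy : y ∈ V) (hxy : x ≠ y) :
    (x > y → omegaPot V y x < omegaPot V x y) ∧
    (∀ q ∈ V, q > x → omegaPot V q y < omegaPot V x y) ∧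
    (∀ z ∈ V, z > x → z > y →
      omegaPot V x z < omegaPot V x y ∧ omegaPot V y z < omegaPot V x y) :=
  stmt8_general V x y
end
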